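/- Let X be a Banach space and C a norm-bounded subset of X* such that (C, γ) is a complete pseudometric space having the w*-uniform separation property in X* with modulus ϖ_C. Let f : C → ℝ ∪ {+∞} be proper and bounded below. Then there exists a > 0 such that for every ε ∈ (0,a] and every p* ∈ C with f(p*) < inf_C f + ε ϖ_C(ε), there exist x ∈ X and u ∈ C with: (i) γ(p*, u) ≤ ε, (ii) ‖x‖ < 2ε, and (iii) the function p ↦ f(p) + ⟨p, x⟩ attains γ-strongly-directionally its infimum over C at direction u. -/

import Mathlib

/-!
Starting from `p₀ = p'`, `ε₀ = ε`, `y₀ = 0`, build centres `pₙ`, radii `εₙ₊₁ ≤ εₙ / 4` and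
perturbations `yₙ₊₁ = yₙ - εₙ xₙ`, where `xₙ` is the USP direction separating `pₙ` by `ϖ(εₙ)` from
everything at γ-distance `≥ εₙ`, and `pₙ₊₁` almost minimises `f + ŷₙ₊₁`. Because `pₙ` almost
minimises `f + ŷₙ` to within `εₙ ϖ(εₙ)`, subtracting `εₙ xₙ` lifts every point at distance `≥ εₙ`
from `pₙ` above `pₙ` by a fixed margin. The perturbations converge to some `x` with
`‖yₙ - x‖ ≤ 4εₙ/3`, so when the radii shrink fast enough against the margins, the margin survives
in `f + x̂`: every near-minimiser of `f + x̂`, in particular every later centre, lies within `εₙ`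
of `pₙ`. Hence `(pₙ)` is γ-Cauchy, its limit `u` is within `ε` of `p'`, and the near-minimisers
of `f + x̂` converge to `u`.
-/

open Metric Set Filter
open scoped Topology

theorem exists_seq_of_forall_exists {α : Type*} {P : α → Prop} {R : α → α → Prop} {s₀ : α}
    (h₀ : P s₀) (hstep : ∀ s, P s → ∃ t, P t ∧ R s t) :
    ∃ u : ℕ → α, u 0 = s₀ ∧ (∀ n, P (u n)) ∧ ∀ n, R (u n) (u (n + 1)) := by
  choose! next hP hR using hstep
  have hPu : ∀ n, P (next^[n] s₀) := fun n => by
    induction n with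
    | zero => exact h₀
    | succ k ih => rw [Function.iterate_succ_apply']; exact hP _ ih
  refine ⟨fun n => next^[n] s₀, rfl, hPu, fun n => ?_⟩
  simp only [Function.iterate_succ_apply']
  exact hR _ (hPu n)

theorem le_pow_mul_of_le_mul_succ {e : ℕ → ℝ} {r : ℝ} (hr : 0 ≤ r)
    (he : ∀ n, e (n + 1) ≤ r * e n) (n k : ℕ) : e (n + k) ≤ r ^ k * e n := by
  induction k with
  | zero => simp
  | succ k ih =>
    calc e (n + (k + 1)) ≤ r * e (n + k) := he (n + k)
      _ ≤ r * (r ^ k * e n) := mul_le_mul_of_nonneg_left ih hr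
      _ = r ^ (k + 1) * e n := by ring

theorem tendsto_zero_of_le_mul_succ {e : ℕ → ℝ} {r : ℝ} (hr₀ : 0 ≤ r) (hr₁ : r < 1)
    (he₀ : ∀ n, 0 ≤ e n) (he : ∀ n, e (n + 1) ≤ r * e n) : Tendsto e atTop (𝓝 0) := by
  refine squeeze_zero he₀ (fun n => by simpa using le_pow_mul_of_le_mul_succ hr₀ he 0 n) ?_
  simpa using (tendsto_pow_atTop_nhds_zero_of_lt_one hr₀ hr₁).mul_const (e 0)

theorem exists_dist_le_of_dist_succ_le {α : Type*} [PseudoMetricSpace α] [CompleteSpace α]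
    {f : ℕ → α} {e : ℕ → ℝ} {r : ℝ} (hr₀ : 0 ≤ r) (hr₁ : r < 1)
    (hf : ∀ n, dist (f n) (f (n + 1)) ≤ e n) (he : ∀ n, e (n + 1) ≤ r * e n) :
    ∃ z, ∀ n, dist (f n) z ≤ e n / (1 - r) := by
  have hgeom : ∀ n k, dist (f (n + k)) (f (n + k + 1)) ≤ e n * r ^ k := fun n k =>
    (hf _).trans (by simpa [mul_comm] using le_pow_mul_of_le_mul_succ hr₀ he n k)
  obtain ⟨z, hz⟩ := cauchySeq_tendsto_of_complete
    (cauchySeq_of_le_geometric r (e 0) hr₁ (by simpa using hgeom 0))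
  refine ⟨z, fun n => ?_⟩
  simpa using dist_le_of_le_geometric_of_tendsto₀ r (e n) hr₁ (hgeom n)
    (by simpa only [add_comm n] using (tendsto_add_atTop_iff_nat n).2 hz)

theorem EReal.sInf_image_eq_coe_sInf {α : Type*} {C T : Set α} {g : α → EReal} {G : α → ℝ}
    (hTC : T ⊆ C) (htop : ∀ p ∈ C, p ∉ T → g p = ⊤) (hG : ∀ p ∈ T, g p = G p)
    (hT : T.Nonempty) (hbdd : BddBelow (G '' T)) : sInf (g '' C) = (sInf (G '' T) : ℝ) := by
  have hC : sInf (g '' C) = sInf (g '' T) := by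
    refine le_antisymm (sInf_le_sInf (image_mono hTC)) (le_sInf ?_)
    rintro _ ⟨p, hp, rfl⟩
    by_cases hpT : p ∈ T
    · exact sInf_le (mem_image_of_mem g hpT)
    · simp [htop p hp hpT]
  rw [hC, Monotone.map_csInf_of_continuousAt continuous_coe_real_ereal.continuousAt
    (fun _ _ h => EReal.coe_le_coe h) (hT.image G) hbdd, image_image]
  exact congrArg sInf (image_congr hG)

structure IsCompletePseudometricOn {α : Type*} (C : Set α) (γ : α → α → ℝ) : Prop where
  self_eq_zero : ∀ p ∈ C, γ p p = 0
  symm : ∀ p ∈ C, ∀ q ∈ C, γ p q = γ q p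
  triangle : ∀ p ∈ C, ∀ q ∈ C, ∀ r ∈ C, γ p q ≤ γ p r + γ r q
  complete : ∀ u : ℕ → α, (∀ n, u n ∈ C) →
    (∀ ε > (0 : ℝ), ∃ N : ℕ, ∀ m ≥ N, ∀ n ≥ N, γ (u m) (u n) < ε) →
    ∃ l ∈ C, Tendsto (fun n => γ (u n) l) atTop (𝓝 0)

namespace IsCompletePseudometricOn

variable {α : Type*} {C : Set α} {γ : α → α → ℝ}

theorem nonneg (hγ : IsCompletePseudometricOn C γ) {p q : α} (hp : p ∈ C) (hq : q ∈ C) :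
    0 ≤ γ p q := by
  linarith [hγ.triangle p hp p hp q hq, hγ.self_eq_zero p hp, hγ.symm p hp q hq]

theorem exists_tendsto_of_lt {p : ℕ → α} {e : ℕ → ℝ} (hγ : IsCompletePseudometricOn C γ)
    (hp : ∀ n, p n ∈ C) (he : Tendsto e atTop (𝓝 0)) (hlt : ∀ n m, n < m → γ (p m) (p n) < e n) :
    ∃ l ∈ C, Tendsto (fun n => γ (p n) l) atTop (𝓝 0) := by
  refine hγ.complete p hp fun ρ hρ => ?_
  obtain ⟨N, hN⟩ := eventually_atTop.1 (he.eventually (gt_mem_nhds hρ))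
  refine ⟨N, fun i hi j hj => ?_⟩
  rcases lt_trichotomy i j with hij | rfl | hji
  · rw [hγ.symm _ (hp i) _ (hp j)]
    exact (hlt i j hij).trans (hN i hi)
  · rw [hγ.self_eq_zero _ (hp i)]
    exact hρ
  · exact (hlt j i hji).trans (hN j hj)

theorem le_of_tendsto (hγ : IsCompletePseudometricOn C γ) {p : ℕ → α} {q l : α} {ε : ℝ}
    (hp : ∀ n, p n ∈ C) (hq : q ∈ C) (hl : l ∈ C) (hlim : Tendsto (fun n => γ (p n) l) atTop (𝓝 0))
    (hle : ∀ᶠ n in atTop, γ (p n) q ≤ ε) : γ q l ≤ ε := by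
  refine ge_of_tendsto (by simpa using tendsto_const_nhds.add hlim) (hle.mono fun n hn => ?_)
  linarith [hγ.triangle q hq l hl (p n) (hp n), hγ.symm _ (hp n) _ hq]

end IsCompletePseudometricOn

section Tilt

variable {X : Type*} [NormedAddCommGroup X] [NormedSpace ℝ X]

def HasUniformSeparation (C : Set (StrongDual ℝ X)) (γ : StrongDual ℝ X → StrongDual ℝ X → ℝ)
    (a : ℝ) (ϖ : ℝ → ℝ) : Prop :=
  ∀ ε ∈ Ioc (0 : ℝ) a, 0 < ϖ ε ∧ ∀ p ∈ C,
    ∃ x : X, ‖x‖ ≤ 1 ∧ ∀ q ∈ C, ε ≤ γ q p → q x ≤ p x - ϖ ε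

/-- The perturbation `F + ŵ` of `F` by the evaluation at `w`. -/
def tilt (F : StrongDual ℝ X → ℝ) (w : X) (p : StrongDual ℝ X) : ℝ := F p + p w

noncomputable def tiltInf (S : Set (StrongDual ℝ X)) (F : StrongDual ℝ X → ℝ) (w : X) : ℝ :=
  sInf (tilt F w '' S)

variable {S : Set (StrongDual ℝ X)} {F : StrongDual ℝ X → ℝ}

theorem tilt_sub_smul (F : StrongDual ℝ X → ℝ) (y x : X) (c : ℝ) (p : StrongDual ℝ X) :
    tilt F (y - c • x) p = tilt F y p - c * p x := by
  simp only [tilt, map_sub, map_smul, smul_eq_mul]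
  ring

theorem abs_tilt_sub_tilt_le (F : StrongDual ℝ X → ℝ) (w w' : X) (p : StrongDual ℝ X) :
    |tilt F w p - tilt F w' p| ≤ ‖p‖ * ‖w - w'‖ := by
  simpa [tilt, ← dist_eq_norm, Real.dist_eq] using p.dist_le_opNorm w w'

theorem bddBelow_tilt_image {D : ℝ} (hF : BddBelow (F '' S)) (hD : ∀ p ∈ S, ‖p‖ ≤ D) (w : X) :
    BddBelow (tilt F w '' S) := by
  obtain ⟨m, hm⟩ := hF
  refine ⟨m - D * ‖w‖, ?_⟩
  rintro _ ⟨p, hp, rfl⟩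
  have hpw : -(‖p‖ * ‖w‖) ≤ p w :=
    (neg_le_neg (by simpa using p.le_opNorm w)).trans (neg_abs_le _)
  have hFp : m ≤ F p := hm (mem_image_of_mem F hp)
  have hDw : ‖p‖ * ‖w‖ ≤ D * ‖w‖ := mul_le_mul_of_nonneg_right (hD p hp) (norm_nonneg w)
  simp only [tilt]
  linarith

theorem tiltInf_le_tilt {w : X} (hbdd : BddBelow (tilt F w '' S)) {p : StrongDual ℝ X}
    (hp : p ∈ S) : tiltInf S F w ≤ tilt F w p :=
  csInf_le hbdd (mem_image_of_mem _ hp)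

theorem exists_tilt_lt_tiltInf_add (hS : S.Nonempty) (w : X) {δ : ℝ} (hδ : 0 < δ) :
    ∃ p ∈ S, tilt F w p < tiltInf S F w + δ := by
  obtain ⟨_, ⟨p, hp, rfl⟩, hlt⟩ := exists_lt_of_csInf_lt (hS.image _) (lt_add_of_pos_right _ hδ)
  exact ⟨p, hp, hlt⟩

end Tilt

/-- `dir` is the USP direction separating `center` at scale `radius`; `shift` is the perturbation
accumulated so far, and `budget` is half the slack by which `center` minimises the tilt by `shift`
to within `radius * ϖ radius`. -/
structure Stage (X : Type*) [NormedAddCommGroup X] [NormedSpace ℝ X] where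
  radius : ℝ
  center : StrongDual ℝ X
  dir : X
  shift : X
  budget : ℝ

namespace Stage

variable {X : Type*} [NormedAddCommGroup X] [NormedSpace ℝ X]
  (S : Set (StrongDual ℝ X)) (γ : StrongDual ℝ X → StrongDual ℝ X → ℝ) (a : ℝ) (ϖ : ℝ → ℝ)
  (F : StrongDual ℝ X → ℝ) (D : ℝ)

structure IsValid (s : Stage X) : Prop where
  radius_pos : 0 < s.radius
  radius_le : s.radius ≤ a
  center_mem : s.center ∈ S
  norm_dir_le : ‖s.dir‖ ≤ 1
  budget_pos : 0 < s.budget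
  separates : ∀ q ∈ S, s.radius ≤ γ q s.center → q s.dir ≤ s.center s.dir - ϖ s.radius
  tilt_add_two_budget_le :
    tilt F s.shift s.center + 2 * s.budget ≤ tiltInf S F s.shift + s.radius * ϖ s.radius

structure Precedes (s t : Stage X) : Prop where
  shift_eq : t.shift = s.shift - s.radius • s.dir
  four_mul_radius_le : 4 * t.radius ≤ s.radius
  -- all later perturbations then move tilts of points of norm `≤ D` by at most `s.budget / 6`
  radius_le_budget : 8 * D * t.radius ≤ s.budget
  budget_le : t.budget ≤ s.budget
  tilt_lt : tilt F t.shift t.center < tiltInf S F t.shift + s.budget / 4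

variable {S γ a ϖ F D}

theorem IsValid.exists_precedes {C : Set (StrongDual ℝ X)} (hUSP : HasUniformSeparation C γ a ϖ)
    (hSC : S ⊆ C) (hD : ∀ p ∈ S, ‖p‖ ≤ D) {s : Stage X} (hs : s.IsValid S γ a ϖ F) :
    ∃ t, t.IsValid S γ a ϖ F ∧ Precedes S F D s t := by
  have hD₀ : 0 ≤ D := (norm_nonneg _).trans (hD _ hs.center_mem)
  set r := min (s.radius / 4) (s.budget / (8 * D + 1))
  have hr₀ : 0 < r := lt_min (by linarith [hs.radius_pos]) (div_pos hs.budget_pos (by linarith))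
  have hra : r ≤ a := (min_le_left _ _).trans (by linarith [hs.radius_pos, hs.radius_le])
  have hrB : r * (8 * D + 1) ≤ s.budget := (le_div_iff₀ (by linarith)).1 (min_le_right _ _)
  obtain ⟨hϖ, hsep⟩ := hUSP r ⟨hr₀, hra⟩
  set β := min (r * ϖ r / 2) (s.budget / 4)
  have hβ₀ : 0 < β := lt_min (by positivity) (by linarith [hs.budget_pos])
  have hβr : β ≤ r * ϖ r / 2 := min_le_left _ _
  have hβB : β ≤ s.budget / 4 := min_le_right _ _
  obtain ⟨p, hpS, hp⟩ :=
    exists_tilt_lt_tiltInf_add (F := F) ⟨_, hs.center_mem⟩ (s.shift - s.radius • s.dir) hβ₀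
  obtain ⟨x, hx, hpx⟩ := hsep p (hSC hpS)
  have hB' : min s.budget ((r * ϖ r - β) / 2) ≤ (r * ϖ r - β) / 2 := min_le_right _ _
  refine ⟨⟨r, p, x, s.shift - s.radius • s.dir, min s.budget ((r * ϖ r - β) / 2)⟩,
    ⟨hr₀, hra, hpS, hx, lt_min hs.budget_pos (by nlinarith), fun q hq => hpx q (hSC hq), ?_⟩,
    ⟨rfl, by linarith [min_le_left (s.radius / 4) (s.budget / (8 * D + 1))], by nlinarith,
      min_le_left _ _, by linarith⟩⟩
  dsimp only
  linarith

theorem IsValid.tilt_add_two_budget_le_of_le {s : Stage X} (hs : s.IsValid S γ a ϖ F)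
    (hbdd : BddBelow (tilt F s.shift '' S)) {q : StrongDual ℝ X} (hq : q ∈ S)
    (hγ : s.radius ≤ γ q s.center) :
    tilt F (s.shift - s.radius • s.dir) s.center + 2 * s.budget ≤
      tilt F (s.shift - s.radius • s.dir) q := by
  rw [tilt_sub_smul, tilt_sub_smul]
  have hsep := mul_le_mul_of_nonneg_left (hs.separates q hq hγ) hs.radius_pos.le
  linarith [tiltInf_le_tilt hbdd hq, hs.tilt_add_two_budget_le]

variable {u : ℕ → Stage X}

theorem tendsto_radius (hu : ∀ n, (u n).IsValid S γ a ϖ F)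
    (hR : ∀ n, Precedes S F D (u n) (u (n + 1))) :
    Tendsto (fun n => (u n).radius) atTop (𝓝 0) :=
  tendsto_zero_of_le_mul_succ (r := 1 / 4) (by norm_num) (by norm_num)
    (fun n => (hu n).radius_pos.le) (fun n => by linarith [(hR n).four_mul_radius_le])

theorem exists_norm_shift_sub_le [CompleteSpace X] (hu : ∀ n, (u n).IsValid S γ a ϖ F)
    (hR : ∀ n, Precedes S F D (u n) (u (n + 1))) :
    ∃ z : X, ∀ n, ‖(u n).shift - z‖ ≤ 4 / 3 * (u n).radius := by
  have hstep : ∀ n, dist (u n).shift (u (n + 1)).shift ≤ (u n).radius := fun n => by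
    rw [(hR n).shift_eq, dist_eq_norm, sub_sub_cancel, norm_smul, Real.norm_of_nonneg
      (hu n).radius_pos.le]
    exact mul_le_of_le_one_right (hu n).radius_pos.le (hu n).norm_dir_le
  obtain ⟨z, hz⟩ := exists_dist_le_of_dist_succ_le (r := 1 / 4) (by norm_num) (by norm_num)
    hstep (fun n => by linarith [(hR n).four_mul_radius_le])
  refine ⟨z, fun n => ?_⟩
  rw [← dist_eq_norm]
  convert hz n using 1
  ring

variable {z : X}

theorem abs_tilt_sub_tilt_shift_succ_le (hR : ∀ n, Precedes S F D (u n) (u (n + 1)))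
    (hD : ∀ p ∈ S, ‖p‖ ≤ D) (hz : ∀ n, ‖(u n).shift - z‖ ≤ 4 / 3 * (u n).radius) (n : ℕ)
    {q : StrongDual ℝ X} (hq : q ∈ S) :
    |tilt F z q - tilt F (u (n + 1)).shift q| ≤ (u n).budget / 6 := by
  have hD₀ : 0 ≤ D := (norm_nonneg _).trans (hD q hq)
  calc |tilt F z q - tilt F (u (n + 1)).shift q|
      ≤ ‖q‖ * ‖(u (n + 1)).shift - z‖ := by
        rw [norm_sub_rev]; exact abs_tilt_sub_tilt_le F _ _ q
    _ ≤ D * (4 / 3 * (u (n + 1)).radius) := mul_le_mul (hD q hq) (hz _) (norm_nonneg _) hD₀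
    _ ≤ (u n).budget / 6 := by linarith [(hR n).radius_le_budget]

theorem lt_radius_of_tilt_lt (hu : ∀ n, (u n).IsValid S γ a ϖ F)
    (hR : ∀ n, Precedes S F D (u n) (u (n + 1))) (hD : ∀ p ∈ S, ‖p‖ ≤ D)
    (hbdd : ∀ w, BddBelow (tilt F w '' S)) (hz : ∀ n, ‖(u n).shift - z‖ ≤ 4 / 3 * (u n).radius)
    (n : ℕ) {q : StrongDual ℝ X} (hq : q ∈ S)
    (hlt : tilt F z q < tilt F z (u n).center + 3 / 2 * (u n).budget) :
    γ q (u n).center < (u n).radius := by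
  by_contra! hγ
  have hsep := (hu n).tilt_add_two_budget_le_of_le (hbdd _) hq hγ
  rw [← (hR n).shift_eq] at hsep
  have hq' := abs_le.1 (abs_tilt_sub_tilt_shift_succ_le hR hD hz n hq)
  have hc := abs_le.1 (abs_tilt_sub_tilt_shift_succ_le hR hD hz n (hu n).center_mem)
  linarith [hq'.1, hc.2]

theorem tilt_succ_center_lt (hu : ∀ n, (u n).IsValid S γ a ϖ F)
    (hR : ∀ n, Precedes S F D (u n) (u (n + 1))) (hD : ∀ p ∈ S, ‖p‖ ≤ D)
    (hbdd : ∀ w, BddBelow (tilt F w '' S)) (hz : ∀ n, ‖(u n).shift - z‖ ≤ 4 / 3 * (u n).radius)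
    {n k : ℕ} (hnk : n ≤ k) :
    tilt F z (u (k + 1)).center < tilt F z (u n).center + 3 / 2 * (u n).budget := by
  have hnext := abs_le.1 (abs_tilt_sub_tilt_shift_succ_le hR hD hz k (hu (k + 1)).center_mem)
  have hc := abs_le.1 (abs_tilt_sub_tilt_shift_succ_le hR hD hz k (hu n).center_mem)
  have hinf := tiltInf_le_tilt (hbdd (u (k + 1)).shift) (hu n).center_mem
  have hB : (u k).budget ≤ (u n).budget :=
    antitone_nat_of_succ_le (f := fun m => (u m).budget) (fun m => (hR m).budget_le) hnk
  linarith [(hR k).tilt_lt, hnext.2, hc.2, (hu n).budget_pos]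

end Stage

theorem exists_tilt_wellPosed_near {X : Type*} [NormedAddCommGroup X] [NormedSpace ℝ X]
    [CompleteSpace X] {C S : Set (StrongDual ℝ X)} {γ : StrongDual ℝ X → StrongDual ℝ X → ℝ}
    {a : ℝ} {ϖ : ℝ → ℝ} {F : StrongDual ℝ X → ℝ} {D ε : ℝ} {p₀ : StrongDual ℝ X}
    (hγ : IsCompletePseudometricOn C γ) (hUSP : HasUniformSeparation C γ a ϖ) (hSC : S ⊆ C)
    (hD : ∀ p ∈ S, ‖p‖ ≤ D) (hbdd : ∀ w, BddBelow (tilt F w '' S)) (hε : ε ∈ Ioc 0 a)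
    (hp₀ : p₀ ∈ S) (hgap : tilt F 0 p₀ < tiltInf S F 0 + ε * ϖ ε) :
    ∃ z : X, ∃ u ∈ C, γ p₀ u ≤ ε ∧ ‖z‖ < 2 * ε ∧
      ∀ ρ > 0, ∃ δ > 0, ∀ q ∈ S, tilt F z q < tiltInf S F z + δ → γ q u < ρ := by
  obtain ⟨x₀, hx₀, hx₀sep⟩ := (hUSP ε hε).2 p₀ (hSC hp₀)
  have h₀ : Stage.IsValid S γ a ϖ F
      ⟨ε, p₀, x₀, 0, (tiltInf S F 0 + ε * ϖ ε - tilt F 0 p₀) / 2⟩ :=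
    ⟨hε.1, hε.2, hp₀, hx₀, by dsimp only; linarith, fun q hq => hx₀sep q (hSC hq),
      by dsimp only; linarith⟩
  obtain ⟨s, hs₀, hs, hR⟩ :=
    exists_seq_of_forall_exists h₀ fun t ht => ht.exists_precedes hUSP hSC hD
  obtain ⟨z, hz⟩ := Stage.exists_norm_shift_sub_le hs hR
  have hrad := Stage.tendsto_radius hs hR
  have hchain : ∀ n m, n < m → γ (s m).center (s n).center < (s n).radius := by
    intro n m hnm
    obtain ⟨k, rfl⟩ : ∃ k, m = k + 1 := ⟨m - 1, by omega⟩
    exact Stage.lt_radius_of_tilt_lt hs hR hD hbdd hz n (hs _).center_mem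
      (Stage.tilt_succ_center_lt hs hR hD hbdd hz (by omega))
  obtain ⟨u, huC, hu⟩ := hγ.exists_tendsto_of_lt (fun n => hSC (hs n).center_mem) hrad hchain
  refine ⟨z, u, huC, ?_, ?_, fun ρ hρ => ?_⟩
  · refine hγ.le_of_tendsto (fun n => hSC (hs n).center_mem) (hSC hp₀) huC hu
      ((eventually_gt_atTop 0).mono fun m hm => ?_)
    simpa [hs₀] using (hchain 0 m hm).le
  · have hz₀ := hz 0
    simp only [hs₀, zero_sub, norm_neg] at hz₀
    linarith [hε.1]
  obtain ⟨n, hn, hnu⟩ := ((hrad.eventually (gt_mem_nhds (half_pos hρ))).and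
    (hu.eventually (gt_mem_nhds (half_pos hρ)))).exists
  refine ⟨3 / 2 * (s n).budget, by linarith [(hs n).budget_pos], fun q hq hlt => ?_⟩
  have hqn := Stage.lt_radius_of_tilt_lt hs hR hD hbdd hz n hq
    (hlt.trans_le (by linarith [tiltInf_le_tilt (hbdd z) (hs n).center_mem]))
  linarith [hγ.triangle q (hSC hq) u huC _ (hSC (hs n).center_mem)]

def effDom {α : Type*} (C : Set α) (f : α → EReal) : Set α := {p ∈ C | f p ≠ ⊤}

def AttainsInfStronglyDirectionally {α : Type*} (C : Set α) (γ : α → α → ℝ) (g : α → EReal)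
    (u : α) : Prop :=
  ∀ q : ℕ → α, (∀ n, q n ∈ C) → Tendsto (fun n => g (q n)) atTop (𝓝 (sInf (g '' C))) →
    Tendsto (fun n => γ (q n) u) atTop (𝓝 0)

theorem AttainsInfStronglyDirectionally.of_forall_lt {α : Type*} {C : Set α}
    {γ : α → α → ℝ} {g : α → EReal} {u : α} {I : ℝ} (hγ : ∀ p ∈ C, 0 ≤ γ p u)
    (hI : sInf (g '' C) = I)
    (hwell : ∀ ρ > 0, ∃ δ > 0, ∀ p ∈ C, g p < ((I + δ : ℝ) : EReal) → γ p u < ρ) :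
    AttainsInfStronglyDirectionally C γ g u := by
  intro q hq hlim
  rw [hI] at hlim
  refine tendsto_order.2 ⟨fun b hb => Eventually.of_forall fun n => hb.trans_le (hγ _ (hq n)),
    fun ρ hρ => ?_⟩
  obtain ⟨δ, hδ, hδρ⟩ := hwell ρ hρ
  exact (hlim.eventually (gt_mem_nhds (EReal.coe_lt_coe_iff.2 (lt_add_of_pos_right I hδ)))).mono
    fun n hn => hδρ _ (hq n) hn

section EReal

variable {X : Type*} [NormedAddCommGroup X] [NormedSpace ℝ X] {C : Set (StrongDual ℝ X)}
  {f : StrongDual ℝ X → EReal} {m : ℝ}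

/-- `(f p).toReal` is junk off `effDom C f`; tilts of it are only ever taken over `effDom C f`. -/
theorem add_coe_eq_tilt (hm : ∀ p ∈ C, (m : EReal) ≤ f p) {p : StrongDual ℝ X}
    (hp : p ∈ effDom C f) (w : X) :
    f p + ((p w : ℝ) : EReal) = (tilt (fun p => (f p).toReal) w p : EReal) := by
  rw [tilt, EReal.coe_add,
    EReal.coe_toReal hp.2 (ne_bot_of_le_ne_bot (EReal.coe_ne_bot m) (hm p hp.1))]

theorem mem_effDom_of_add_coe_lt {p : StrongDual ℝ X} (hp : p ∈ C) {r : ℝ} {s : EReal}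
    (h : f p + (r : EReal) < s) : p ∈ effDom C f :=
  ⟨hp, fun htop => by simp [htop] at h⟩

theorem bddBelow_tilt_effDom {D : ℝ} (hD : ∀ p ∈ C, ‖p‖ ≤ D)
    (hm : ∀ p ∈ C, (m : EReal) ≤ f p) (w : X) :
    BddBelow (tilt (fun p => (f p).toReal) w '' effDom C f) := by
  refine bddBelow_tilt_image ⟨m, ?_⟩ (fun p hp => hD p hp.1) w
  rintro _ ⟨p, hp, rfl⟩
  simpa using EReal.toReal_le_toReal (hm p hp.1) (EReal.coe_ne_bot m) hp.2

theorem sInf_image_add_coe_eq_tiltInf {D : ℝ} (hD : ∀ p ∈ C, ‖p‖ ≤ D)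
    (hm : ∀ p ∈ C, (m : EReal) ≤ f p) (hne : (effDom C f).Nonempty) (w : X) :
    sInf ((fun p => f p + ((p w : ℝ) : EReal)) '' C) =
      (tiltInf (effDom C f) (fun p => (f p).toReal) w : EReal) :=
  EReal.sInf_image_eq_coe_sInf (fun p hp => hp.1)
    (fun p hpC hpS => by simp [show f p = ⊤ by simpa [effDom, hpC] using hpS])
    (fun p hp => add_coe_eq_tilt hm hp w) hne (bddBelow_tilt_effDom hD hm w)

theorem exists_perturbation_attainsInfStronglyDirectionally [CompleteSpace X]
    {γ : StrongDual ℝ X → StrongDual ℝ X → ℝ} {a D ε : ℝ} {ϖ : ℝ → ℝ} {p₀ : StrongDual ℝ X}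
    (hγ : IsCompletePseudometricOn C γ) (hUSP : HasUniformSeparation C γ a ϖ)
    (hD : ∀ p ∈ C, ‖p‖ ≤ D) (hm : ∀ p ∈ C, (m : EReal) ≤ f p) (hε : ε ∈ Ioc 0 a) (hp₀ : p₀ ∈ C)
    (hlt : f p₀ < sInf (f '' C) + ((ε * ϖ ε : ℝ) : EReal)) :
    ∃ x : X, ∃ u ∈ C, γ p₀ u ≤ ε ∧ ‖x‖ < 2 * ε ∧
      AttainsInfStronglyDirectionally C γ (fun p => f p + ((p x : ℝ) : EReal)) u := by
  have hp₀S : p₀ ∈ effDom C f := ⟨hp₀, ne_top_of_lt hlt⟩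
  have hinf := sInf_image_add_coe_eq_tiltInf hD hm ⟨p₀, hp₀S⟩
  have hgap : tilt (fun p => (f p).toReal) 0 p₀ <
      tiltInf (effDom C f) (fun p => (f p).toReal) 0 + ε * ϖ ε := by
    have h0 := hinf 0
    simp only [map_zero, EReal.coe_zero, add_zero] at h0
    rw [h0, ← add_zero (f p₀), ← EReal.coe_zero, ← map_zero p₀, add_coe_eq_tilt hm hp₀S] at hlt
    exact_mod_cast hlt
  obtain ⟨x, u, huC, hp₀u, hx, hwell⟩ := exists_tilt_wellPosed_near hγ hUSP (fun p hp => hp.1)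
    (fun p hp => hD p hp.1) (bddBelow_tilt_effDom hD hm) hε hp₀S hgap
  refine ⟨x, u, huC, hp₀u, hx,
    .of_forall_lt (fun p hp => hγ.nonneg hp huC) (hinf x) fun ρ hρ => ?_⟩
  obtain ⟨δ, hδ, hδρ⟩ := hwell ρ hρ
  refine ⟨δ, hδ, fun p hpC hpδ => ?_⟩
  have hpS := mem_effDom_of_add_coe_lt hpC hpδ
  rw [add_coe_eq_tilt hm hpS] at hpδ
  exact hδρ p hpS (EReal.coe_lt_coe_iff.1 hpδ)

end EReal

theorem localized_variational_principle_general
    {X : Type*} [NormedAddCommGroup X] [NormedSpace ℝ X] [CompleteSpace X]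
    (C : Set (StrongDual ℝ X))
    (γ : StrongDual ℝ X → StrongDual ℝ X → ℝ)
    (hbdd : ∃ D : ℝ, ∀ p ∈ C, ‖p‖ ≤ D)
    (hγ0 : ∀ p ∈ C, γ p p = 0)
    (hγsymm : ∀ p ∈ C, ∀ q ∈ C, γ p q = γ q p)
    (hγtri : ∀ p ∈ C, ∀ q ∈ C, ∀ r ∈ C, γ p q ≤ γ p r + γ r q)
    (hcomplete : ∀ u : ℕ → StrongDual ℝ X, (∀ n, u n ∈ C) →
      (∀ ε > (0 : ℝ), ∃ N : ℕ, ∀ m ≥ N, ∀ n ≥ N, γ (u m) (u n) < ε) →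
      ∃ l ∈ C, Tendsto (fun n => γ (u n) l) atTop (nhds 0))
    (a : ℝ) (ha : 0 < a) (ϖ : ℝ → ℝ)
    (hUSP : ∀ ε ∈ Set.Ioc (0 : ℝ) a, 0 < ϖ ε ∧ ∀ p ∈ C,
      ∃ x : X, ‖x‖ ≤ 1 ∧ ∀ q ∈ C, ε ≤ γ q p → q x ≤ p x - ϖ ε)
    (f : StrongDual ℝ X → EReal)
    (hbelow : ∃ m : ℝ, ∀ p ∈ C, (m : EReal) ≤ f p) :
    ∃ a' : ℝ, 0 < a' ∧ a' ≤ a ∧ ∀ ε ∈ Set.Ioc (0 : ℝ) a', ∀ p' ∈ C,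
      f p' < sInf (f '' C) + ((ε * ϖ ε : ℝ) : EReal) →
      ∃ x : X, ∃ u ∈ C,
        γ p' u ≤ ε ∧ ‖x‖ < 2 * ε ∧
        ∀ q : ℕ → StrongDual ℝ X, (∀ n, q n ∈ C) →
          Tendsto (fun n => f (q n) + ((q n x : ℝ) : EReal)) atTop
            (nhds (sInf ((fun p => f p + ((p x : ℝ) : EReal)) '' C))) →
          Tendsto (fun n => γ (q n) u) atTop (nhds 0) := by
  obtain ⟨D, hD⟩ := hbdd
  obtain ⟨m, hm⟩ := hbelow
  exact ⟨a, ha, le_rfl, fun ε hε p' hp' hlt => exists_perturbation_attainsInfStronglyDirectionally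
    ⟨hγ0, hγsymm, hγtri, hcomplete⟩ hUSP hD hm hε hp' hlt⟩

/-- localized linear variational principle. Under the w*-USP with modulus `ϖ` on the
norm-bounded complete pseudometric space `(C,γ) ⊆ X*`, every `p* ∈ C` with
`f(p*) < inf_C f + ε·ϖ(ε)` admits a small linear perturbation `x` (with `‖x‖ < 2ε`) such that
`f + x̂` attains γ-strongly-directionally its infimum at some direction `u` with `γ(p*,u) ≤ ε`. -/
theorem localized_variational_principle
    {X : Type*} [NormedAddCommGroup X] [NormedSpace ℝ X] [CompleteSpace X]
    (C : Set (StrongDual ℝ X))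
    (γ : StrongDual ℝ X → StrongDual ℝ X → ℝ)
    (hbdd : ∃ D : ℝ, ∀ p ∈ C, ‖p‖ ≤ D)
    (hγ0 : ∀ p ∈ C, γ p p = 0)
    (hγsymm : ∀ p ∈ C, ∀ q ∈ C, γ p q = γ q p)
    (hγtri : ∀ p ∈ C, ∀ q ∈ C, ∀ r ∈ C, γ p q ≤ γ p r + γ r q)
    (hcomplete : ∀ u : ℕ → StrongDual ℝ X, (∀ n, u n ∈ C) →
      (∀ ε > (0 : ℝ), ∃ N : ℕ, ∀ m ≥ N, ∀ n ≥ N, γ (u m) (u n) < ε) →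
      ∃ l ∈ C, Tendsto (fun n => γ (u n) l) atTop (nhds 0))
    (a : ℝ) (ha : 0 < a) (ϖ : ℝ → ℝ)
    (hUSP : ∀ ε ∈ Set.Ioc (0 : ℝ) a, 0 < ϖ ε ∧ ∀ p ∈ C,
      ∃ x : X, ‖x‖ ≤ 1 ∧ ∀ q ∈ C, ε ≤ γ q p → q x ≤ p x - ϖ ε)
    (f : StrongDual ℝ X → EReal)
    (hproper : ∃ p ∈ C, f p ≠ ⊤)
    (hbelow : ∃ m : ℝ, ∀ p ∈ C, (m : EReal) ≤ f p) :
    ∃ a' : ℝ, 0 < a' ∧ a' ≤ a ∧ ∀ ε ∈ Set.Ioc (0 : ℝ) a', ∀ p' ∈ C,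
      f p' < sInf (f '' C) + ((ε * ϖ ε : ℝ) : EReal) →
      ∃ x : X, ∃ u ∈ C,
        γ p' u ≤ ε ∧ ‖x‖ < 2 * ε ∧
        ∀ q : ℕ → StrongDual ℝ X, (∀ n, q n ∈ C) →
          Tendsto (fun n => f (q n) + ((q n x : ℝ) : EReal)) atTop
            (nhds (sInf ((fun p => f p + ((p x : ℝ) : EReal)) '' C))) →
          Tendsto (fun n => γ (q n) u) atTop (nhds 0) :=
  localized_variational_principle_general C γ hbdd hγ0 hγsymm hγtri hcomplete a ha ϖ hUSP f hbelow
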